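/- arXiv:1101.0486 — 2 statements merged into one kernel-verified Lean document; each statement's English description precedes it below -/
import Mathlib

section
/- Let Φ^t be an ergodic measurable flow on a metric space X preserving a Borel probability measure μ. Let Σ ⊆ X be a section: for every x ∈ X the time t'(x) = min{t ≥ 0 : Φ^t(x) ∈ Σ} is well defined and finite, and for every x ∈ Σ the return time t(x) = min{t > 0 : Φ^t(x) ∈ Σ} is well defined and finite. Let π(x) = Φ^{t'(x)}(x), let F : Σ → Σ, F(x) = Φ^{t(x)}(x), be the Poincaré map, and let μ_F be the F-invariant probability measure on Σ induced by μ, so that (Σ,F,μ_F) is ergodic and every subset of Σ of full μ_F-measure has π-preimage of full μ-measure. Suppose ∫_Σ t(x) dμ_F(x) < ∞. Let (S_r)_{r>0} be a decreasing family of measurable subsets of Σ with lim_{r→0} μ_F(S_r) = 0. Then there is a set C ⊆ X with μ(C) = 1 such that for every x ∈ C, lim_{r→0} log τ(x,S_r)/(−log r) = lim_{r→0} log τ^Σ(π(x),S_r)/(−log r), in the sense that the corresponding limsups coincide and the corresponding liminfs coincide. -/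
open MeasureTheory Filter Set Topology

/-- `Φ` is a flow: time `0` is the identity and the group law holds. -/
def IsFlow {X : Type*} (Φ : ℝ → X → X) : Prop :=
  (∀ x, Φ 0 x = x) ∧ ∀ s t x, Φ (s + t) x = Φ s (Φ t x)

/-- Hitting time of a set `A` for the flow `Φ` started at `x`:
`τ(x,A) = inf {t ≥ 0 : Φᵗ x ∈ A}`. -/
noncomputable def hitTime {X : Type*} (Φ : ℝ → X → X) (x : X) (A : Set X) : ℝ :=
  sInf {t : ℝ | 0 ≤ t ∧ Φ t x ∈ A}

/-- Hitting time of a set `S` under iteration of `F`: least `n ≥ 1` with `F^[n] x ∈ S`. -/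
noncomputable def hitTimeN {X : Type*} (F : X → X) (x : X) (S : Set X) : ℕ :=
  sInf {n : ℕ | 1 ≤ n ∧ F^[n] x ∈ S}

/-!
Write `y = π(x)` and `B_n(y) = ∑_{k<n} t(F^k y)`. Along the flow orbit of `x` the section is met
exactly at the times `t'(x) + B_n(y)`, so `τ(x, S_r) = t'(x) + B_n(y)` with `n = τ^Σ(y, S_r)`.
Garsia's maximal ergodic inequality shows that for `μ_F`-a.e. `y` the sums `B_n(y)` stay between
two positive multiples of `n`, so `log τ(x, S_r)` and `log τ^Σ(y, S_r)` differ by a bounded amount,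
which vanishes after division by `-log r`. The set `⋂_r S_r` is `μ_F`-null, so a.e. orbit avoids
it and `τ^Σ(y, S_r) → ∞`; the full-measure set of good `y` is pulled back to `X` by `π`.
-/

namespace Real

variable {s t : Set ℝ}

lemma csInf_le_csInf_of_forall_add_mem (h : ∀ ε > 0, ∀ a ∈ s, a + ε ∈ t) (hs : s.Nonempty)
    (ht : BddBelow t) : sInf t ≤ sInf s := by
  refine le_of_forall_pos_le_add fun ε hε => ?_
  obtain ⟨a, ha, has⟩ := exists_lt_of_csInf_lt hs (lt_add_of_pos_right (sInf s) (half_pos hε))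
  linarith [csInf_le ht (h _ (half_pos hε) a ha)]

lemma sInf_eq_of_forall_add_mem (hst : ∀ ε > 0, ∀ a ∈ s, a + ε ∈ t)
    (hts : ∀ ε > 0, ∀ a ∈ t, a + ε ∈ s) : sInf s = sInf t := by
  have bdd_of_bdd {u v : Set ℝ} (h : ∀ a ∈ u, a + 1 ∈ v) : BddBelow v → BddBelow u :=
    fun ⟨b, hb⟩ => ⟨b - 1, fun a ha => by linarith [hb (h a ha)]⟩
  rcases s.eq_empty_or_nonempty with rfl | hs
  · rw [eq_empty_of_forall_notMem fun a ha => (hts 1 one_pos a ha).elim]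
  have ht : t.Nonempty := hs.elim fun a ha => ⟨_, hst 1 one_pos a ha⟩
  by_cases hb : BddBelow s
  · have hb' := bdd_of_bdd (hts 1 one_pos) hb
    exact le_antisymm (csInf_le_csInf_of_forall_add_mem hts ht hb)
      (csInf_le_csInf_of_forall_add_mem hst hs hb')
  · have hb' : ¬ BddBelow t := fun h => hb (bdd_of_bdd (hst 1 one_pos) h)
    rw [sInf_of_not_bddBelow hb, sInf_of_not_bddBelow hb']

variable {α : Type*} {l : Filter α} {f g : α → ℝ}

lemma limsup_eq_of_tendsto_sub (h : Tendsto (fun x => f x - g x) l (𝓝 0)) :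
    limsup f l = limsup g l := by
  have shift {u v : α → ℝ} (h : Tendsto (fun x => u x - v x) l (𝓝 0)) (ε : ℝ) (hε : 0 < ε) (a : ℝ)
      (ha : ∀ᶠ x in l, v x ≤ a) : ∀ᶠ x in l, u x ≤ a + ε := by
    filter_upwards [ha, h (Iio_mem_nhds hε)] with x hx hx'
    simp only [mem_preimage, mem_Iio] at hx'
    linarith
  have h' : Tendsto (fun x => g x - f x) l (𝓝 0) := by simpa using h.neg
  simp only [limsup_eq]
  exact sInf_eq_of_forall_add_mem (shift h') (shift h)

lemma liminf_eq_neg_limsup_neg : liminf f l = -limsup (-f) l := by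
  rw [liminf_eq, limsup_eq, sInf_def, neg_neg]
  congr 1
  ext a
  simp [neg_le]

lemma liminf_eq_of_tendsto_sub (h : Tendsto (fun x => f x - g x) l (𝓝 0)) :
    liminf f l = liminf g l := by
  rw [liminf_eq_neg_limsup_neg, liminf_eq_neg_limsup_neg,
    limsup_eq_of_tendsto_sub (g := -g) (by simpa [neg_add_eq_sub] using h.neg)]

lemma abs_log_sub_log_le {u v c C : ℝ} (hc : 0 < c) (hv : 0 < v) (hcu : c * v ≤ u)
    (huC : u ≤ C * v) : |log u - log v| ≤ max |log c| |log C| := by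
  have hu : 0 < u := (mul_pos hc hv).trans_le hcu
  rw [← log_div hu.ne' hv.ne']
  have hlo : log c ≤ log (u / v) := log_le_log hc ((le_div_iff₀ hv).2 hcu)
  have hhi : log (u / v) ≤ log C :=
    log_le_log (div_pos hu hv) ((div_le_iff₀ hv).2 huC)
  rw [abs_le]
  constructor <;> linarith [neg_abs_le (log c), le_abs_self (log C),
    le_max_left |log c| |log C|, le_max_right |log c| |log C|]

lemma tendsto_div_neg_log_sub_div_neg_log {u v : ℝ → ℝ} {L : ℝ}
    (h : ∀ᶠ r in 𝓝[>] 0, |u r - v r| ≤ L) :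
    Tendsto (fun r => u r / -log r - v r / -log r) (𝓝[>] 0) (𝓝 0) := by
  have hlog : Tendsto (fun r => (-log r)⁻¹) (𝓝[>] 0) (𝓝 0) :=
    tendsto_inv_atTop_zero.comp (tendsto_neg_atBot_atTop.comp tendsto_log_nhdsGT_zero)
  refine (isBoundedUnder_le_mul_tendsto_zero (isBoundedUnder_of_eventually_le h) hlog).congr
    fun r => ?_
  ring

end Real

section Birkhoff

variable {X : Type*} {T : X → X} {g : X → ℝ}

/-- `birkhoffMax T g N y = max_{n ≤ N} birkhoffSum T g n y`, computed by the recursion that drives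
Garsia's proof of the maximal ergodic theorem. -/
noncomputable def birkhoffMax (T : X → X) (g : X → ℝ) : ℕ → X → ℝ
  | 0 => 0
  | N + 1 => fun y => max 0 (g y + birkhoffMax T g N (T y))

lemma birkhoffMax_succ (N : ℕ) (y : X) :
    birkhoffMax T g (N + 1) y = max 0 (g y + birkhoffMax T g N (T y)) :=
  rfl

lemma birkhoffMax_nonneg (N : ℕ) (y : X) : 0 ≤ birkhoffMax T g N y := by
  cases N with
  | zero => exact le_rfl
  | succ N => exact le_max_left _ _

lemma birkhoffSum_le_birkhoffMax {n N : ℕ} (h : n ≤ N) (y : X) :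
    birkhoffSum T g n y ≤ birkhoffMax T g N y := by
  induction N generalizing n y with
  | zero => simp [Nat.le_zero.1 h, birkhoffMax]
  | succ N ih =>
    cases n with
    | zero => simpa using birkhoffMax_nonneg (N + 1) y
    | succ n =>
      rw [birkhoffSum_succ']
      exact le_max_of_le_right (add_le_add le_rfl (ih (n := n) (by omega) (T y)))

lemma exists_birkhoffMax_eq_birkhoffSum (N : ℕ) (y : X) :
    ∃ n ≤ N, birkhoffMax T g N y = birkhoffSum T g n y := by
  induction N generalizing y with
  | zero => exact ⟨0, le_rfl, by simp [birkhoffMax]⟩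
  | succ N ih =>
    obtain ⟨n, hn, hmax⟩ := ih (T y)
    rcases max_choice 0 (g y + birkhoffMax T g N (T y)) with h | h
    · exact ⟨0, by omega, by simpa [birkhoffMax] using h⟩
    · exact ⟨n + 1, by omega, by rw [birkhoffMax_succ, h, hmax, birkhoffSum_succ']⟩

lemma monotone_birkhoffMax (y : X) : Monotone fun N => birkhoffMax T g N y := by
  refine monotone_nat_of_le_succ fun N => ?_
  obtain ⟨n, hn, hmax⟩ := exists_birkhoffMax_eq_birkhoffSum (T := T) (g := g) N y
  exact hmax ▸ birkhoffSum_le_birkhoffMax (hn.trans N.le_succ) y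

lemma exists_pos_birkhoffMax_iff (y : X) :
    (∃ N, 0 < birkhoffMax T g N y) ↔ ∃ n, 0 < birkhoffSum T g n y := by
  constructor
  · rintro ⟨N, hN⟩
    obtain ⟨n, -, hmax⟩ := exists_birkhoffMax_eq_birkhoffSum (T := T) (g := g) N y
    exact ⟨n, hmax ▸ hN⟩
  · rintro ⟨n, hn⟩
    exact ⟨n, hn.trans_le (birkhoffSum_le_birkhoffMax le_rfl y)⟩

lemma birkhoffMax_succ_sub_le_indicator (N : ℕ) (y : X) :
    birkhoffMax T g (N + 1) y - birkhoffMax T g N (T y) ≤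
      {z | 0 < birkhoffMax T g (N + 1) z}.indicator g y := by
  by_cases h : 0 < birkhoffMax T g (N + 1) y
  · have hpos : 0 < g y + birkhoffMax T g N (T y) := by
      simpa [birkhoffMax_succ] using h
    rw [indicator_of_mem (s := {z | 0 < birkhoffMax T g (N + 1) z}) h, birkhoffMax_succ,
      max_eq_right hpos.le]
    linarith
  · rw [indicator_of_notMem (s := {z | 0 < birkhoffMax T g (N + 1) z}) h]
    linarith [not_lt.1 h, birkhoffMax_nonneg (T := T) (g := g) N (T y)]

lemma bddAbove_range_birkhoffSum_apply_iff (y : X) :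
    BddAbove (range fun n => birkhoffSum T g n (T y)) ↔
      BddAbove (range fun n => birkhoffSum T g n y) := by
  constructor
  · rintro ⟨M, hM⟩
    refine ⟨max 0 (g y + M), forall_mem_range.2 fun n => ?_⟩
    cases n with
    | zero => simp
    | succ n =>
      rw [birkhoffSum_succ']
      exact le_max_of_le_right (add_le_add le_rfl (hM (mem_range_self n)))
  · rintro ⟨M, hM⟩
    refine ⟨M - g y, forall_mem_range.2 fun n => ?_⟩
    have := hM (mem_range_self (n + 1))
    rw [birkhoffSum_succ'] at this
    linarith

lemma strictMono_birkhoffSum_of_pos {s : Set X}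
    (hT : MapsTo T s s) (hg : ∀ x ∈ s, 0 < g x) {y : X} (hy : y ∈ s) :
    StrictMono fun n => birkhoffSum T g n y :=
  strictMono_nat_of_lt_succ fun n => by
    rw [birkhoffSum_succ]
    linarith [hg _ (hT.iterate n hy)]

variable [MeasurableSpace X] {ν : Measure X}

lemma measurable_birkhoffMax (hT : Measurable T) (hg : Measurable g) (N : ℕ) :
    Measurable (birkhoffMax T g N) := by
  induction N with
  | zero => exact measurable_const
  | succ N ih => exact measurable_const.max (hg.add (ih.comp hT))

lemma integrable_birkhoffMax (hT : MeasurePreserving T ν ν) (hgi : Integrable g ν) (N : ℕ) :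
    Integrable (birkhoffMax T g N) ν := by
  induction N with
  | zero => exact integrable_zero _ _ _
  | succ N ih =>
    have := (hgi.add (hT.integrable_comp_of_integrable ih)).pos_part
    exact this.congr (.of_forall fun y => max_comm _ _)

/-- Garsia's maximal ergodic theorem. -/
theorem setIntegral_birkhoffSum_pos_nonneg (hT : MeasurePreserving T ν ν) (hg : Measurable g)
    (hgi : Integrable g ν) : 0 ≤ ∫ y in {y | ∃ n, 0 < birkhoffSum T g n y}, g y ∂ν := by
  set E : ℕ → Set X := fun N => {y | 0 < birkhoffMax T g N y}
  have hE : ∀ N, MeasurableSet (E N) := fun N =>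
    measurableSet_lt measurable_const (measurable_birkhoffMax hT.measurable hg N)
  have hstep : ∀ N, 0 ≤ ∫ y in E (N + 1), g y ∂ν := by
    intro N
    have hM := integrable_birkhoffMax hT hgi
    have hMT : Integrable (fun y => birkhoffMax T g N (T y)) ν :=
      hT.integrable_comp_of_integrable (hM N)
    have hcomp : ∫ y, birkhoffMax T g N (T y) ∂ν = ∫ y, birkhoffMax T g N y ∂ν := by
      rw [← integral_map hT.measurable.aemeasurable
        (by rw [hT.map_eq]; exact (hM N).aestronglyMeasurable), hT.map_eq]
    have hle := integral_mono (f := fun y => birkhoffMax T g (N + 1) y - birkhoffMax T g N (T y))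
      ((hM (N + 1)).sub hMT)
      (hgi.indicator (hE (N + 1))) (birkhoffMax_succ_sub_le_indicator N)
    rw [integral_sub (hM (N + 1)) hMT, hcomp,
      integral_indicator (hE (N + 1))] at hle
    linarith [integral_mono (hM N) (hM (N + 1)) fun y => monotone_birkhoffMax y N.le_succ]
  have hunion : ⋃ N, E N = {y | ∃ n, 0 < birkhoffSum T g n y} := by
    ext y
    simpa [E] using exists_pos_birkhoffMax_iff y
  have hlim := tendsto_setIntegral_of_monotone hE
    (fun M N hMN y (hy : 0 < _) => hy.trans_le (monotone_birkhoffMax y hMN)) hgi.integrableOn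
  rw [hunion] at hlim
  exact ge_of_tendsto hlim (eventually_atTop.2 ⟨1, fun N hN => by
    obtain ⟨M, rfl⟩ := Nat.exists_eq_add_of_le' hN
    exact hstep M⟩)

lemma measurable_birkhoffSum (hT : Measurable T) (hg : Measurable g) (n : ℕ) :
    Measurable (birkhoffSum T g n) :=
  Finset.measurable_sum _ fun i _ => hg.comp (hT.iterate i)

/-- The set where the Birkhoff sums are unbounded above is invariant, so by ergodicity it is null
or conull; in the second case the maximal ergodic theorem forces `∫ g ≥ 0`. -/
theorem Ergodic.ae_bddAbove_range_birkhoffSum (hT : Ergodic T ν) (hgi : Integrable g ν)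
    (hneg : ∫ y, g y ∂ν < 0) : ∀ᵐ y ∂ν, BddAbove (range fun n => birkhoffSum T g n y) := by
  obtain ⟨g', hg'm, hgg'⟩ := hgi.aemeasurable
  have hsum : ∀ᵐ y ∂ν, ∀ n, birkhoffSum T g n y = birkhoffSum T g' n y :=
    ae_all_iff.2 (hT.quasiMeasurePreserving.birkhoffSum_ae_eq_of_ae_eq hgg')
  set D := {y | BddAbove (range fun n => birkhoffSum T g' n y)}
  have hD : MeasurableSet D :=
    measurableSet_bddAbove_range (measurable_birkhoffSum hT.measurable hg'm)
  have hDinv : T ⁻¹' D = D := ext bddAbove_range_birkhoffSum_apply_iff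
  have hDc : ν Dᶜ = 0 := by
    refine (hT.measure_self_or_compl_eq_zero hD.compl (by rw [preimage_compl, hDinv])).resolve_right
      fun hD0 => hneg.not_ge ?_
    have hE : ∀ᵐ y ∂ν, y ∈ {y | ∃ n, 0 < birkhoffSum T g' n y} := by
      filter_upwards [measure_eq_zero_iff_ae_notMem.1 (compl_compl D ▸ hD0)] with y hy
      obtain ⟨_, ⟨n, rfl⟩, hn⟩ := not_bddAbove_iff.1 hy 0
      exact ⟨n, hn⟩
    have := setIntegral_birkhoffSum_pos_nonneg hT.toMeasurePreserving hg'm (hgi.congr hgg')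
    rwa [Measure.restrict_eq_self_of_ae_mem hE, ← integral_congr_ae hgg'] at this
  filter_upwards [measure_eq_zero_iff_ae_notMem.1 hDc, hsum] with y hy hy'
  simp only [hy']
  exact not_not.1 hy

variable [IsProbabilityMeasure ν]

theorem Ergodic.ae_eventually_birkhoffSum_le (hT : Ergodic T ν) (hgi : Integrable g ν) {b : ℝ}
    (hb : ∫ y, g y ∂ν < b) : ∀ᵐ y ∂ν, ∀ᶠ n : ℕ in atTop, birkhoffSum T g n y ≤ b * n := by
  set b' := (∫ y, g y ∂ν + b) / 2 with hb'
  have hgi' : Integrable (fun y => g y - b') ν := hgi.sub (integrable_const b')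
  have hbdd := hT.ae_bddAbove_range_birkhoffSum hgi'
    (by rw [integral_sub hgi (integrable_const b')]; simp; linarith)
  filter_upwards [hbdd] with y ⟨M, hM⟩
  filter_upwards [tendsto_natCast_atTop_atTop.eventually_ge_atTop (M / (b - b'))] with n hn
  have hMn : birkhoffSum T g n y - n * b' ≤ M := by
    simpa [birkhoffSum] using hM (mem_range_self n)
  rw [div_le_iff₀ (by linarith)] at hn
  linarith

theorem Ergodic.ae_eventually_le_birkhoffSum (hT : Ergodic T ν) (hgi : Integrable g ν) {a : ℝ}
    (ha : a < ∫ y, g y ∂ν) : ∀ᵐ y ∂ν, ∀ᶠ n : ℕ in atTop, a * n ≤ birkhoffSum T g n y := by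
  filter_upwards [hT.ae_eventually_birkhoffSum_le hgi.neg (b := -a) (by simpa [integral_neg])]
    with y hy
  filter_upwards [hy] with n hn
  simp only [birkhoffSum_neg] at hn
  linarith

end Birkhoff

lemma MeasureTheory.MeasurePreserving.ae_forall_iterate_notMem {X : Type*} [MeasurableSpace X]
    {ν : Measure X} {T : X → X} (hT : MeasurePreserving T ν ν) {s : Set X} (hs : ν s = 0) :
    ∀ᵐ y ∂ν, ∀ k, T^[k] y ∉ s :=
  ae_all_iff.2 fun k => measure_eq_zero_iff_ae_notMem.1 ((hT.iterate k).preimage_null hs)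

lemma MeasureTheory.integral_pos_of_pos_on {X : Type*} [MeasurableSpace X] {ν : Measure X}
    [IsProbabilityMeasure ν] {f : X → ℝ} (hf : Integrable f ν) {s : Set X} (hs : ν s = 1)
    (hpos : ∀ x ∈ s, 0 < f x) : 0 < ∫ x, f x ∂ν := by
  have hpos_ae : ∀ᵐ x ∂ν, 0 < f x := by
    refine (mem_ae_iff_prob_eq_one₀
      (nullMeasurableSet_lt aemeasurable_const hf.aemeasurable)).2 ?_
    exact le_antisymm prob_le_one (hs ▸ measure_mono hpos)
  rw [integral_pos_iff_support_of_nonneg_ae (hpos_ae.mono fun x hx => hx.le) hf]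
  exact (hs ▸ one_pos).trans_le (measure_mono fun x hx => (hpos x hx).ne')

lemma eventually_forall_lt_iterate_notMem {X : Type*} {F : X → X} {y : X} {S : ℝ → Set X}
    (hS : Monotone S) (hy : ∀ k, ∃ r > 0, F^[k] y ∉ S r) (K : ℕ) :
    ∀ᶠ r in 𝓝[>] 0, ∀ k < K, F^[k] y ∉ S r := by
  refine (eventually_all_finite (finite_lt_nat K)).2 fun k _ => ?_
  obtain ⟨r₀, hr₀, hk⟩ := hy k
  filter_upwards [Ioo_mem_nhdsGT hr₀] with r hr hmem
  exact hk (hS hr.2.le hmem)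

section PoincareSection

variable {X : Type*} {Φ : ℝ → X → X} {Sec : Set X} {ret : X → ℝ} {F : X → X}

lemma flow_birkhoffSum_eq_iterate (hflow : IsFlow Φ) (hF : EqOn F (fun x => Φ (ret x) x) Sec)
    (hFS : MapsTo F Sec Sec) {y : X} (hy : y ∈ Sec) (k : ℕ) :
    Φ (birkhoffSum F ret k y) y = F^[k] y := by
  induction k with
  | zero => exact hflow.1 y
  | succ k ih =>
    rw [birkhoffSum_succ, add_comm, hflow.2, ih, Function.iterate_succ_apply',
      hF (hFS.iterate k hy)]

lemma exists_eq_birkhoffSum_of_flow_mem (hflow : IsFlow Φ)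
    (hR : ∀ x ∈ Sec, IsLeast {s | 0 < s ∧ Φ s x ∈ Sec} (ret x))
    (hF : EqOn F (fun x => Φ (ret x) x) Sec) (hFS : MapsTo F Sec Sec) {y : X} (hy : y ∈ Sec)
    {s : ℝ} (hs : 0 ≤ s) (hsy : Φ s y ∈ Sec) {m : ℕ} (hm : s < birkhoffSum F ret m y) :
    ∃ k, s = birkhoffSum F ret k y := by
  induction m with
  | zero => exact absurd hm (by simpa using hs)
  | succ m ih =>
    by_cases hsm : s < birkhoffSum F ret m y
    · exact ih hsm
    refine ⟨m, le_antisymm ?_ (not_lt.1 hsm)⟩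
    by_contra hlt
    set d := s - birkhoffSum F ret m y
    have hd : Φ d (F^[m] y) ∈ Sec := by
      rwa [← flow_birkhoffSum_eq_iterate hflow hF hFS hy, ← hflow.2, sub_add_cancel]
    have := (hR _ (hFS.iterate m hy)).2 ⟨sub_pos.2 (not_le.1 hlt), hd⟩
    rw [birkhoffSum_succ] at hm
    linarith

lemma setOf_flow_mem_eq_image (hflow : IsFlow Φ)
    (hR : ∀ x ∈ Sec, IsLeast {s | 0 < s ∧ Φ s x ∈ Sec} (ret x))
    (hF : EqOn F (fun x => Φ (ret x) x) Sec) (hFS : MapsTo F Sec Sec) {x : X} {t₀ : ℝ}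
    (ht₀ : IsLeast {t | 0 ≤ t ∧ Φ t x ∈ Sec} t₀)
    (hunb : Tendsto (fun n => birkhoffSum F ret n (Φ t₀ x)) atTop atTop)
    {A : Set X} (hA : A ⊆ Sec) (hxA : Φ t₀ x ∉ A) :
    {t | 0 ≤ t ∧ Φ t x ∈ A} =
      (fun n => t₀ + birkhoffSum F ret n (Φ t₀ x)) '' {n | 1 ≤ n ∧ F^[n] (Φ t₀ x) ∈ A} := by
  set y := Φ t₀ x
  have hy : y ∈ Sec := ht₀.1.2
  have hshift (s : ℝ) : Φ s y = Φ (t₀ + s) x := by rw [add_comm, hflow.2]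
  ext t
  constructor
  · rintro ⟨ht, htA⟩
    have hts : t₀ ≤ t := ht₀.2 ⟨ht, hA htA⟩
    have hmem : Φ (t - t₀) y ∈ A := by rwa [hshift, add_sub_cancel]
    obtain ⟨m, hm⟩ := (hunb.eventually_gt_atTop (t - t₀)).exists
    obtain ⟨k, hk⟩ := exists_eq_birkhoffSum_of_flow_mem hflow hR hF hFS hy (sub_nonneg.2 hts)
      (hA hmem) hm
    rw [hk, flow_birkhoffSum_eq_iterate hflow hF hFS hy] at hmem
    refine ⟨k, ⟨Nat.one_le_iff_ne_zero.2 fun hk0 => hxA ?_, hmem⟩, by simp [← hk]⟩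
    simpa [hk0] using hmem
  · rintro ⟨n, ⟨-, hn⟩, rfl⟩
    have hB : 0 ≤ birkhoffSum F ret n y :=
      (strictMono_birkhoffSum_of_pos hFS (fun z hz => (hR z hz).1.1) hy).monotone n.zero_le
    refine ⟨add_nonneg ht₀.1.1 hB, ?_⟩
    rwa [← hshift, flow_birkhoffSum_eq_iterate hflow hF hFS hy]

lemma exists_eventually_abs_log_hitTime_sub_log_hitTimeN_le (hflow : IsFlow Φ)
    (hR : ∀ x ∈ Sec, IsLeast {s | 0 < s ∧ Φ s x ∈ Sec} (ret x))
    (hF : EqOn F (fun x => Φ (ret x) x) Sec) (hFS : MapsTo F Sec Sec) {x : X} {t₀ : ℝ}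
    (ht₀ : IsLeast {t | 0 ≤ t ∧ Φ t x ∈ Sec} t₀) {c C : ℝ} (hc : 0 < c)
    (hB : ∀ᶠ n : ℕ in atTop, c * n ≤ birkhoffSum F ret n (Φ t₀ x) ∧
      birkhoffSum F ret n (Φ t₀ x) ≤ C * n)
    {S : ℝ → Set X} (hSsec : ∀ r, S r ⊆ Sec) (hS : Monotone S)
    (havoid : ∀ k, ∃ r > 0, F^[k] (Φ t₀ x) ∉ S r) :
    ∃ L, ∀ᶠ r in 𝓝[>] 0,
      |Real.log (hitTime Φ x (S r)) - Real.log (hitTimeN F (Φ t₀ x) (S r))| ≤ L := by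
  set y := Φ t₀ x
  set B := fun n => birkhoffSum F ret n y
  have hBmono : Monotone B :=
    (strictMono_birkhoffSum_of_pos hFS (fun z hz => (hR z hz).1.1) ht₀.1.2).monotone
  have hunb : Tendsto B atTop atTop :=
    tendsto_atTop_mono' atTop (hB.mono fun n hn => hn.1)
      (tendsto_natCast_atTop_atTop.const_mul_atTop hc)
  obtain ⟨N, hN⟩ := eventually_atTop.1 hB
  refine ⟨max |Real.log c| |Real.log (t₀ + C)|, ?_⟩
  filter_upwards [eventually_forall_lt_iterate_notMem hS havoid (N + 1)] with r hr
  have hset := setOf_flow_mem_eq_image hflow hR hF hFS ht₀ hunb (hSsec r) (hr 0 N.succ_pos)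
  rcases {n | 1 ≤ n ∧ F^[n] y ∈ S r}.eq_empty_or_nonempty with hempty | hne
  · -- no hit at all: both hitting times take the junk value `sInf ∅ = 0`
    rw [hitTime, hitTimeN, hset, hempty]
    simp
  set n := hitTimeN F y (S r)
  have hn : 1 ≤ n ∧ F^[n] y ∈ S r := Nat.sInf_mem hne
  have hNn : N ≤ n := not_lt.1 fun h => hr n (by omega) hn.2
  have hτ : hitTime Φ x (S r) = t₀ + B n := by
    rw [hitTime, hset]
    exact ((monotone_const.add hBmono).map_csInf hne).symm
  have hn1 : (1 : ℝ) ≤ n := by exact_mod_cast hn.1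
  obtain ⟨hcB, hBC⟩ := hN n hNn
  rw [hτ]
  refine Real.abs_log_sub_log_le hc (by positivity) (by linarith [ht₀.1.1]) ?_
  nlinarith [ht₀.1.1]

end PoincareSection

theorem hitting_time_flow_vs_section_general
    {X : Type*} [MeasurableSpace X]
    (Φ : ℝ → X → X) (μ : Measure X)
    (hflow : IsFlow Φ)
    (Sec : Set X)
    -- `t'` is the first nonnegative hitting time of the section, defined for every `x`
    (t' : X → ℝ) (ht'0 : ∀ x, 0 ≤ t' x) (ht'mem : ∀ x, Φ (t' x) x ∈ Sec)
    (ht'min : ∀ x, ∀ s, 0 ≤ s → Φ s x ∈ Sec → t' x ≤ s)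
    -- `ret` is the first strictly positive return time of points of the section
    (ret : X → ℝ) (hret0 : ∀ x ∈ Sec, 0 < ret x)
    (hretmem : ∀ x ∈ Sec, Φ (ret x) x ∈ Sec)
    (hretmin : ∀ x ∈ Sec, ∀ s, 0 < s → Φ s x ∈ Sec → ret x ≤ s)
    -- the Poincaré map and the induced invariant ergodic measure on the section
    (F : X → X) (hF : ∀ x ∈ Sec, F x = Φ (ret x) x)
    (μF : Measure X) [IsProbabilityMeasure μF] (hμFsec : μF Sec = 1)
    (hergF : Ergodic F μF)
    (hπfull : ∀ A : Set X, A ⊆ Sec → μF A = 1 → μ ((fun x => Φ (t' x) x) ⁻¹' A) = 1)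
    (hint : Integrable ret μF)
    (S : ℝ → Set X) (hSsec : ∀ r, S r ⊆ Sec)
    (hSmono : ∀ r₁ r₂ : ℝ, r₁ ≤ r₂ → S r₁ ⊆ S r₂)
    (hS0 : Tendsto (fun r => μF (S r)) (𝓝[>] (0:ℝ)) (𝓝 0)) :
    ∃ C : Set X, μ C = 1 ∧ ∀ x ∈ C,
      (limsup (fun r => Real.log (hitTime Φ x (S r)) / (-Real.log r)) (𝓝[>] (0:ℝ)) =
        limsup (fun r => Real.log ((hitTimeN F (Φ (t' x) x) (S r) : ℝ)) / (-Real.log r))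
          (𝓝[>] (0:ℝ))) ∧
      (liminf (fun r => Real.log (hitTime Φ x (S r)) / (-Real.log r)) (𝓝[>] (0:ℝ)) =
        liminf (fun r => Real.log ((hitTimeN F (Φ (t' x) x) (S r) : ℝ)) / (-Real.log r))
          (𝓝[>] (0:ℝ))) := by
  have hR : ∀ x ∈ Sec, IsLeast {s | 0 < s ∧ Φ s x ∈ Sec} (ret x) := fun x hx =>
    ⟨⟨hret0 x hx, hretmem x hx⟩, fun s hs => hretmin x hx s hs.1 hs.2⟩
  have hFS : MapsTo F Sec Sec := fun y hy => hF y hy ▸ hretmem y hy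
  have ht' : ∀ x, IsLeast {t | 0 ≤ t ∧ Φ t x ∈ Sec} (t' x) := fun x =>
    ⟨⟨ht'0 x, ht'mem x⟩, fun s hs => ht'min x s hs.1 hs.2⟩
  set S₀ := ⋂ r ∈ Ioi (0 : ℝ), S r
  have hS₀ : μF S₀ = 0 := nonpos_iff_eq_zero.1 <| ge_of_tendsto hS0 <|
    eventually_mem_nhdsWithin.mono fun r hr => measure_mono (biInter_subset_of_mem hr)
  set I := ∫ y, ret y ∂μF
  have hI : 0 < I := integral_pos_of_pos_on hint hμFsec hret0
  set good := fun y => (∀ k, F^[k] y ∉ S₀) ∧ ∀ᶠ n : ℕ in atTop,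
    I / 2 * n ≤ birkhoffSum F ret n y ∧ birkhoffSum F ret n y ≤ (I + 1) * n
  have hgood : ∀ᵐ y ∂μF, good y := by
    filter_upwards [hergF.toMeasurePreserving.ae_forall_iterate_notMem hS₀,
      hergF.ae_eventually_le_birkhoffSum hint (half_lt_self hI),
      hergF.ae_eventually_birkhoffSum_le hint (lt_add_one I)] with y h₀ hlo hhi
    exact ⟨h₀, hlo.and hhi⟩
  refine ⟨(fun x => Φ (t' x) x) ⁻¹' (Sec ∩ {y | good y}),
    hπfull _ inter_subset_left ((measure_inter_conull (ae_iff.1 hgood)).trans hμFsec),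
    fun x ⟨_, hx₀, hxB⟩ => ?_⟩
  have havoid : ∀ k, ∃ r > 0, F^[k] (Φ (t' x) x) ∉ S r := fun k => by
    simpa [S₀] using hx₀ k
  obtain ⟨L, hL⟩ := exists_eventually_abs_log_hitTime_sub_log_hitTimeN_le hflow hR hF hFS (ht' x)
    (half_pos hI) hxB hSsec hSmono havoid
  have hlim := Real.tendsto_div_neg_log_sub_div_neg_log hL
  exact ⟨Real.limsup_eq_of_tendsto_sub hlim, Real.liminf_eq_of_tendsto_sub hlim⟩

/-- For an ergodic measure preserving flow with a Poincaré section `Σ` whose return time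
is `μ_F`-integrable, and a decreasing family of targets `S_r ⊆ Σ` with `μ_F(S_r) → 0`,
there is a full measure set of points `x` at which the hitting-time scaling exponent of
the flow equals the one of the Poincaré map at `π(x)` (both for `limsup` and `liminf`). -/
theorem hitting_time_flow_vs_section
    {X : Type*} [MetricSpace X] [MeasurableSpace X] [BorelSpace X]
    (Φ : ℝ → X → X) (μ : Measure X) [IsProbabilityMeasure μ]
    (hflow : IsFlow Φ) (hmeas : ∀ t, Measurable (Φ t))
    (hpres : ∀ t, MeasurePreserving (Φ t) μ μ)
    (herg : ∀ s : Set X, MeasurableSet s → (∀ t, Φ t ⁻¹' s = s) → μ s = 0 ∨ μ s = 1)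
    (Sec : Set X)
    -- `t'` is the first nonnegative hitting time of the section, defined for every `x`
    (t' : X → ℝ) (ht'0 : ∀ x, 0 ≤ t' x) (ht'mem : ∀ x, Φ (t' x) x ∈ Sec)
    (ht'min : ∀ x, ∀ s, 0 ≤ s → Φ s x ∈ Sec → t' x ≤ s)
    -- `ret` is the first strictly positive return time of points of the section
    (ret : X → ℝ) (hret0 : ∀ x ∈ Sec, 0 < ret x)
    (hretmem : ∀ x ∈ Sec, Φ (ret x) x ∈ Sec)
    (hretmin : ∀ x ∈ Sec, ∀ s, 0 < s → Φ s x ∈ Sec → ret x ≤ s)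
    -- the Poincaré map and the induced invariant ergodic measure on the section
    (F : X → X) (hF : ∀ x ∈ Sec, F x = Φ (ret x) x)
    (μF : Measure X) [IsProbabilityMeasure μF] (hμFsec : μF Sec = 1)
    (hergF : Ergodic F μF)
    (hπfull : ∀ A : Set X, A ⊆ Sec → μF A = 1 → μ ((fun x => Φ (t' x) x) ⁻¹' A) = 1)
    (hint : Integrable ret μF)
    (S : ℝ → Set X) (hSsec : ∀ r, S r ⊆ Sec) (hSmeas : ∀ r, MeasurableSet (S r))
    (hSmono : ∀ r₁ r₂ : ℝ, r₁ ≤ r₂ → S r₁ ⊆ S r₂)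
    (hS0 : Tendsto (fun r => μF (S r)) (𝓝[>] (0:ℝ)) (𝓝 0)) :
    ∃ C : Set X, μ C = 1 ∧ ∀ x ∈ C,
      (limsup (fun r => Real.log (hitTime Φ x (S r)) / (-Real.log r)) (𝓝[>] (0:ℝ)) =
        limsup (fun r => Real.log ((hitTimeN F (Φ (t' x) x) (S r) : ℝ)) / (-Real.log r))
          (𝓝[>] (0:ℝ))) ∧
      (liminf (fun r => Real.log (hitTime Φ x (S r)) / (-Real.log r)) (𝓝[>] (0:ℝ)) =
        liminf (fun r => Real.log ((hitTimeN F (Φ (t' x) x) (S r) : ℝ)) / (-Real.log r))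
          (𝓝[>] (0:ℝ))) :=
  hitting_time_flow_vs_section_general Φ μ hflow Sec t' ht'0 ht'mem ht'min ret hret0 hretmem hretmin
    F hF μF hμFsec hergF hπfull hint S hSsec hSmono hS0
end

section
/- Let Φ^t be a flow on X, let B ⊆ X, let ε > 0, and set C_ε = {x : Φ^t(x) ∈ B for some 0 ≤ t < ε}, C_{2ε} = {x : Φ^t(x) ∈ B for some 0 ≤ t < 2ε} and C_{−ε} = {x : Φ^t(x) ∈ B for some −ε < t ≤ 0}. Let S be any set with C_ε ⊆ S ⊆ C_{2ε} ∪ C_{−ε}, and let τ_ε(x,S) = min{n ∈ ℕ, n ≥ 1 : Φ^{nε}(x) ∈ S} be the hitting time of the time-ε map of the flow. Then for every x ∈ X: (i) if the hitting time τ(x,B) is finite, attained (i.e. Φ^{τ(x,B)}(x) ∈ B) and satisfies τ(x,B) ≥ ε, then τ_ε(x,S) ≤ ⌊τ(x,B)/ε⌋, hence τ_ε(x,S) ≤ τ(x,B)/ε + 1; (ii) if τ_ε(x,S) is finite, then τ(x,B) ≤ ε·τ_ε(x,S) + 2ε. -/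
/-!
Cut the flow orbit into windows of length `ε`. If the orbit first meets `B` at time `τ ≥ ε`,
then at the sample time `⌊τ/ε⌋ ε` it is less than `ε` away from `B`, i.e. in `C_ε ⊆ S`.
Conversely, a sample time `n ε` at which the orbit is in `S ⊆ C_{2ε} ∪ C_{-ε}` lies within
`2ε` before, or `ε` after, a visit to `B`, and `n ≥ 1` keeps that visit at a nonnegative time.
-/

open MeasureTheory Filter Set Topology

/-- Hitting time of a set `S` for the time-`ε` map of the flow `Φ` started at `x`:
least `n ≥ 1` with `Φ^{nε} x ∈ S`. -/
noncomputable def hitTimeEps {X : Type*} (Φ : ℝ → X → X) (ε : ℝ) (x : X) (S : Set X) : ℕ :=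
  sInf {n : ℕ | 1 ≤ n ∧ Φ ((n : ℝ) * ε) x ∈ S}

section

variable {X : Type*} {Φ : ℝ → X → X} {x : X} {ε : ℝ}

theorem hitTime_le {A : Set X} {t : ℝ} (ht : 0 ≤ t) (hA : Φ t x ∈ A) : hitTime Φ x A ≤ t :=
  csInf_le ⟨0, fun _ hs => hs.1⟩ ⟨ht, hA⟩

theorem hitTime_le_add_of_mem (hadd : ∀ s t x, Φ (s + t) x = Φ s (Φ t x)) {A : Set X}
    {s t : ℝ} (hts : 0 ≤ t + s) (hA : Φ t (Φ s x) ∈ A) : hitTime Φ x A ≤ t + s :=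
  hitTime_le hts (by rwa [hadd])

theorem hitTimeEps_le {S : Set X} {n : ℕ} (hn : 1 ≤ n) (hS : Φ (n * ε) x ∈ S) :
    hitTimeEps Φ ε x S ≤ n :=
  Nat.sInf_le ⟨hn, hS⟩

theorem hitTimeEps_spec {S : Set X} (hne : {n : ℕ | 1 ≤ n ∧ Φ (n * ε) x ∈ S}.Nonempty) :
    1 ≤ hitTimeEps Φ ε x S ∧ Φ (hitTimeEps Φ ε x S * ε) x ∈ S :=
  Nat.sInf_mem hne

theorem hitTimeEps_le_floor_div (hadd : ∀ s t x, Φ (s + t) x = Φ s (Φ t x)) (hε : 0 < ε)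
    {B S : Set X} (hS : {y | ∃ t, 0 ≤ t ∧ t < ε ∧ Φ t y ∈ B} ⊆ S) {t : ℝ} (hεt : ε ≤ t)
    (hB : Φ t x ∈ B) : hitTimeEps Φ ε x S ≤ ⌊t / ε⌋₊ := by
  set n := ⌊t / ε⌋₊
  have hn : 1 ≤ n := Nat.le_floor (by simpa using (one_le_div hε).mpr hεt)
  have hnε : n * ε ≤ t := (le_div_iff₀ hε).mp (Nat.floor_le (div_nonneg (hε.le.trans hεt) hε.le))
  have ht_lt : t < (n + 1) * ε := (div_lt_iff₀ hε).mp (Nat.lt_floor_add_one _)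
  refine hitTimeEps_le hn (hS ⟨t - n * ε, by linarith, by linarith, ?_⟩)
  rwa [← hadd, sub_add_cancel]

end

/-- Comparison between the hitting time of a target `B` for a flow and the hitting time,
for the time-`ε` map, of any set `S` with `C_ε ⊆ S ⊆ C_{2ε} ∪ C_{-ε}`:
(i) if `τ(x,B)` is finite, attained and `≥ ε` then `τ_ε(x,S) ≤ ⌊τ(x,B)/ε⌋ ≤ τ(x,B)/ε + 1`;
(ii) if `τ_ε(x,S)` is finite then `τ(x,B) ≤ ε τ_ε(x,S) + 2ε`. -/
theorem hitting_time_flow_time_eps_map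
    {X : Type*} (Φ : ℝ → X → X) (hflow : IsFlow Φ)
    (B : Set X) (ε : ℝ) (hε : 0 < ε)
    (Ce C2e Cne : Set X)
    (hCe : Ce = {x | ∃ t, 0 ≤ t ∧ t < ε ∧ Φ t x ∈ B})
    (hC2e : C2e = {x | ∃ t, 0 ≤ t ∧ t < 2 * ε ∧ Φ t x ∈ B})
    (hCne : Cne = {x | ∃ t, -ε < t ∧ t ≤ 0 ∧ Φ t x ∈ B})
    (S : Set X) (hS1 : Ce ⊆ S) (hS2 : S ⊆ C2e ∪ Cne) (x : X) :
    (Φ (hitTime Φ x B) x ∈ B → ε ≤ hitTime Φ x B →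
      hitTimeEps Φ ε x S ≤ ⌊hitTime Φ x B / ε⌋₊ ∧
      (hitTimeEps Φ ε x S : ℝ) ≤ hitTime Φ x B / ε + 1) ∧
    ({n : ℕ | 1 ≤ n ∧ Φ ((n : ℝ) * ε) x ∈ S}.Nonempty →
      hitTime Φ x B ≤ ε * (hitTimeEps Φ ε x S : ℝ) + 2 * ε) := by
  obtain ⟨-, hadd⟩ := hflow
  subst hCe hC2e hCne
  refine ⟨fun hB hετ => ?_, fun hne => ?_⟩
  · have hfloor := hitTimeEps_le_floor_div hadd hε hS1 hετ hB
    refine ⟨hfloor, ?_⟩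
    calc (hitTimeEps Φ ε x S : ℝ) ≤ ⌊hitTime Φ x B / ε⌋₊ := by exact_mod_cast hfloor
      _ ≤ hitTime Φ x B / ε + 1 := by
        linarith [Nat.floor_le (div_nonneg (hε.le.trans hετ) hε.le)]
  · obtain ⟨hn, hnS⟩ := hitTimeEps_spec hne
    have hnε : ε ≤ hitTimeEps Φ ε x S * ε := le_mul_of_one_le_left hε.le (by exact_mod_cast hn)
    rcases hS2 hnS with ⟨t, ht0, ht, htB⟩ | ⟨t, ht, ht0, htB⟩ <;>
      linarith [hitTime_le_add_of_mem hadd (by linarith) htB]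
end
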